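/- Talagrand's contraction lemma: if ℓ(·, y) is L-Lipschitz in its first argument for every y, then the empirical Rademacher complexity of the loss class G = {(x,y) ↦ ℓ(f(x), y) : f ∈ F} is at most L times the empirical Rademacher complexity of F: R̂_N(G) ≤ L · R̂_N(F). -/

import Mathlib

open scoped NNReal

/-- Empirical Rademacher complexity of a set of sample-vectors `V ⊆ ℝ^N`:
the average over the `2^N` sign patterns of `sup_{v ∈ V} (1/N) Σ_i σ_i v_i`. -/
noncomputable def empRad {N : ℕ} (V : Set (Fin N → ℝ)) : ℝ :=
  (1 / 2 ^ N) * ∑ σ : Fin N → Bool,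
    sSup ((fun v : Fin N → ℝ =>
      (1 / (N : ℝ)) * ∑ i, (if σ i then (1 : ℝ) else -1) * v i) '' V)

/-!
Replace the coordinates of the loss vectors, one at a time, by `L` times the coordinates of the
`F`-vectors. Pair each sign pattern with the one that differs from it only at the current
coordinate `k`: the two suprema share the rest `R` of the signed sum and read
`sup (R + φ) + sup (R - φ)`. For any `a, a'`, the contraction bound `φ a - φ a' ≤ |ψ a - ψ a'|`
gives `(R a + φ a) + (R a' - φ a') ≤ (R b + ψ b) + (R b' - ψ b')` for `b, b'` equal to `a, a'`
in one order or the other, so the pair of suprema can only grow when `φ` is replaced by `ψ`.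
-/

def boolSign (b : Bool) : ℝ := if b then 1 else -1

@[simp] lemma boolSign_not (b : Bool) : boolSign (!b) = -boolSign b := by
  cases b <;> simp [boolSign]

@[simp] lemma abs_boolSign (b : Bool) : |boolSign b| = 1 := by
  cases b <;> simp [boolSign]

section SignedSum

variable {ι α : Type*} [Fintype ι]

def signedSum (σ : ι → Bool) (v : ι → ℝ) : ℝ := ∑ i, boolSign (σ i) * v i

lemma signedSum_const_mul (σ : ι → Bool) (c : ℝ) (v : ι → ℝ) :
    signedSum σ (fun i => c * v i) = c * signedSum σ v := by
  simp only [signedSum, Finset.mul_sum]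
  exact Finset.sum_congr rfl fun i _ => by ring

lemma signedSum_eq_sum_erase_add (σ : ι → Bool) (v : ι → ℝ) (k : ι) [DecidableEq ι] :
    signedSum σ v = ∑ i ∈ Finset.univ.erase k, boolSign (σ i) * v i + boolSign (σ k) * v k :=
  (Finset.sum_erase_add _ _ (Finset.mem_univ k)).symm

lemma signedSum_update_not (σ : ι → Bool) (v : ι → ℝ) (k : ι) [DecidableEq ι] :
    signedSum (Function.update σ k (!σ k)) v
      = ∑ i ∈ Finset.univ.erase k, boolSign (σ i) * v i - boolSign (σ k) * v k := by
  rw [signedSum_eq_sum_erase_add _ _ k, Function.update_self, boolSign_not, neg_mul,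
    ← sub_eq_add_neg]
  congr 1
  refine Finset.sum_congr rfl fun i hi => ?_
  rw [Function.update_of_ne (Finset.ne_of_mem_erase hi)]

lemma two_mul_signedSum_piecewise (σ : ι → Bool) (v v' : ι → ℝ) (T : Finset ι)
    [DecidablePred (· ∈ T)] :
    2 * signedSum σ (T.piecewise v v')
      = signedSum σ v + signedSum (T.piecewise σ fun i => !σ i) v
        + signedSum σ v' + signedSum (T.piecewise (fun i => !σ i) σ) v' := by
  simp only [signedSum, Finset.mul_sum, ← Finset.sum_add_distrib]
  refine Finset.sum_congr rfl fun i _ => ?_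
  by_cases hi : i ∈ T <;> simp [Finset.piecewise, hi] <;> ring

lemma bddAbove_signedSum_piecewise {S : Set α} {v v' : α → ι → ℝ}
    (hv : ∀ σ, BddAbove ((fun a => signedSum σ (v a)) '' S))
    (hv' : ∀ σ, BddAbove ((fun a => signedSum σ (v' a)) '' S))
    (T : Finset ι) [DecidablePred (· ∈ T)] (σ : ι → Bool) :
    BddAbove ((fun a => signedSum σ (T.piecewise (v a) (v' a))) '' S) := by
  obtain ⟨M₁, hM₁⟩ := hv σ
  obtain ⟨M₂, hM₂⟩ := hv (T.piecewise σ fun i => !σ i)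
  obtain ⟨M₃, hM₃⟩ := hv' σ
  obtain ⟨M₄, hM₄⟩ := hv' (T.piecewise (fun i => !σ i) σ)
  refine ⟨(M₁ + M₂ + M₃ + M₄) / 2, ?_⟩
  rintro _ ⟨a, ha, rfl⟩
  have := two_mul_signedSum_piecewise σ (v a) (v' a) T
  linarith [hM₁ ⟨a, ha, rfl⟩, hM₂ ⟨a, ha, rfl⟩, hM₃ ⟨a, ha, rfl⟩, hM₄ ⟨a, ha, rfl⟩]

end SignedSum

lemma sSup_add_sSup_le_of_le_abs_sub {α : Type*} {S : Set α} (hS : S.Nonempty) (R φ ψ : α → ℝ)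
    (hφψ : ∀ a ∈ S, ∀ a' ∈ S, φ a - φ a' ≤ |ψ a - ψ a'|)
    (hadd : BddAbove ((fun a => R a + ψ a) '' S)) (hsub : BddAbove ((fun a => R a - ψ a) '' S)) :
    sSup ((fun a => R a + φ a) '' S) + sSup ((fun a => R a - φ a) '' S)
      ≤ sSup ((fun a => R a + ψ a) '' S) + sSup ((fun a => R a - ψ a) '' S) := by
  set C := sSup ((fun a => R a + ψ a) '' S) + sSup ((fun a => R a - ψ a) '' S)
  have hpair : ∀ a ∈ S, ∀ a' ∈ S, (R a + φ a) + (R a' - φ a') ≤ C := by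
    intro a ha a' ha'
    have hadd_le {b} (hb : b ∈ S) := le_csSup hadd ⟨b, hb, rfl⟩
    have hsub_le {b} (hb : b ∈ S) := le_csSup hsub ⟨b, hb, rfl⟩
    have hφ := hφψ a ha a' ha'
    rcases le_total (ψ a') (ψ a) with h | h
    · rw [abs_of_nonneg (sub_nonneg.2 h)] at hφ
      linarith [hadd_le ha, hsub_le ha']
    · rw [abs_of_nonpos (sub_nonpos.2 h)] at hφ
      linarith [hadd_le ha', hsub_le ha]
  rw [← le_sub_iff_add_le]
  refine csSup_le (hS.image _) ?_
  rintro _ ⟨a, ha, rfl⟩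
  rw [le_sub_comm]
  refine csSup_le (hS.image _) ?_
  rintro _ ⟨a', ha', rfl⟩
  linarith [hpair a ha a' ha']

section Contraction

variable {ι α : Type*} [Fintype ι] [DecidableEq ι] {S : Set α}

lemma sum_sSup_signedSum_le_of_eq_except (hS : S.Nonempty) (u w : α → ι → ℝ) (k : ι)
    (heq : ∀ a, ∀ i ≠ k, u a i = w a i)
    (hk : ∀ a ∈ S, ∀ a' ∈ S, |u a k - u a' k| ≤ |w a k - w a' k|)
    (hw : ∀ σ, BddAbove ((fun a => signedSum σ (w a)) '' S)) :
    ∑ σ, sSup ((fun a => signedSum σ (u a)) '' S)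
      ≤ ∑ σ, sSup ((fun a => signedSum σ (w a)) '' S) := by
  set flip : (ι → Bool) → ι → Bool := fun σ => Function.update σ k (!σ k)
  have hflip : Function.Involutive flip := fun σ => by simp [flip]
  have sum_flip (G : (ι → Bool) → ℝ) : ∑ σ, G (flip σ) = ∑ σ, G σ :=
    Fintype.sum_equiv hflip.toPerm _ _ fun _ => rfl
  have hpair (σ : ι → Bool) :
      sSup ((fun a => signedSum σ (u a)) '' S) + sSup ((fun a => signedSum (flip σ) (u a)) '' S)
        ≤ sSup ((fun a => signedSum σ (w a)) '' S)
          + sSup ((fun a => signedSum (flip σ) (w a)) '' S) := by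
    set R : α → ℝ := fun a => ∑ i ∈ Finset.univ.erase k, boolSign (σ i) * w a i
    have hR (a : α) : ∑ i ∈ Finset.univ.erase k, boolSign (σ i) * u a i = R a :=
      Finset.sum_congr rfl fun i hi => by rw [heq a i (Finset.ne_of_mem_erase hi)]
    simp only [flip, signedSum_update_not _ _ k, signedSum_eq_sum_erase_add _ _ k, hR]
    refine sSup_add_sSup_le_of_le_abs_sub hS R _ _ (fun a ha a' ha' => ?_) ?_ ?_
    · rw [← mul_sub, ← mul_sub, abs_mul, abs_boolSign, one_mul]
      calc _ ≤ |boolSign (σ k) * (u a k - u a' k)| := le_abs_self _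
        _ ≤ |w a k - w a' k| := by rw [abs_mul, abs_boolSign, one_mul]; exact hk a ha a' ha'
    · simpa only [signedSum_eq_sum_erase_add _ _ k] using hw σ
    · simpa only [flip, signedSum_update_not _ _ k] using hw (flip σ)
  have hsum := Finset.sum_le_sum fun σ (_ : σ ∈ Finset.univ) => hpair σ
  simp only [Finset.sum_add_distrib, sum_flip fun σ => sSup ((fun a => signedSum σ (u a)) '' S),
    sum_flip fun σ => sSup ((fun a => signedSum σ (w a)) '' S)] at hsum
  linarith

theorem sum_sSup_signedSum_le_of_abs_sub_le (hS : S.Nonempty) (u w : α → ι → ℝ)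
    (hcontr : ∀ i, ∀ a ∈ S, ∀ a' ∈ S, |u a i - u a' i| ≤ |w a i - w a' i|)
    (hu : ∀ σ, BddAbove ((fun a => signedSum σ (u a)) '' S))
    (hw : ∀ σ, BddAbove ((fun a => signedSum σ (w a)) '' S)) :
    ∑ σ, sSup ((fun a => signedSum σ (u a)) '' S)
      ≤ ∑ σ, sSup ((fun a => signedSum σ (w a)) '' S) := by
  suffices h : ∀ T : Finset ι, ∑ σ, sSup ((fun a => signedSum σ (u a)) '' S)
      ≤ ∑ σ, sSup ((fun a => signedSum σ (T.piecewise (w a) (u a))) '' S) by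
    simpa only [Finset.piecewise_univ] using h Finset.univ
  intro T
  induction T using Finset.induction_on with
  | empty => simp only [Finset.piecewise_empty, le_refl]
  | insert k T hk ih =>
    refine ih.trans (sum_sSup_signedSum_le_of_eq_except hS _ _ k (fun a i hi => ?_)
      (fun a ha a' ha' => ?_) (bddAbove_signedSum_piecewise hw hu _))
    · rw [Finset.piecewise_insert_of_ne (h := hi)]
    · simpa only [Finset.piecewise_insert, Function.update_self,
        Finset.piecewise_eq_of_notMem _ _ _ hk] using hcontr k a ha a' ha'

end Contraction

section ConstMul

variable {α : Type*} {S : Set α} {c : ℝ}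

lemma sSup_image_const_mul (hc : 0 ≤ c) (g : α → ℝ) :
    sSup ((fun a => c * g a) '' S) = c * sSup (g '' S) := by
  rw [← smul_eq_mul, ← Real.sSup_smul_of_nonneg hc, ← Set.image_smul, Set.image_image]
  rfl

lemma BddAbove.image_const_mul {g : α → ℝ} (hc : 0 ≤ c) (h : BddAbove (g '' S)) :
    BddAbove ((fun a => c * g a) '' S) := by
  simpa only [Set.image_image] using (monotone_mul_left_of_nonneg hc).map_bddAbove h

lemma bddAbove_image_of_const_mul {g : α → ℝ} (hc : 0 < c)
    (h : BddAbove ((fun a => c * g a) '' S)) : BddAbove (g '' S) := by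
  simpa only [← mul_assoc, inv_mul_cancel₀ hc.ne', one_mul] using
    h.image_const_mul (inv_nonneg.2 hc.le)

end ConstMul

theorem sum_sSup_signedSum_le_mul {ι α : Type*} [Fintype ι] [DecidableEq ι] {S : Set α}
    (hS : S.Nonempty) (u v : α → ι → ℝ) {L : ℝ} (hL : 0 ≤ L)
    (hLip : ∀ i, ∀ a ∈ S, ∀ a' ∈ S, |u a i - u a' i| ≤ L * |v a i - v a' i|)
    (hu : ∀ σ, BddAbove ((fun a => signedSum σ (u a)) '' S))
    (hv : ∀ σ, BddAbove ((fun a => signedSum σ (v a)) '' S)) :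
    ∑ σ, sSup ((fun a => signedSum σ (u a)) '' S)
      ≤ L * ∑ σ, sSup ((fun a => signedSum σ (v a)) '' S) := by
  have h := sum_sSup_signedSum_le_of_abs_sub_le hS u (fun a i => L * v a i)
    (fun i a ha a' ha' => by rw [← mul_sub, abs_mul, abs_of_nonneg hL]; exact hLip i a ha a' ha')
    hu (fun σ => by simpa only [signedSum_const_mul] using (hv σ).image_const_mul hL)
  simpa only [signedSum_const_mul, sSup_image_const_mul hL, ← Finset.mul_sum] using h

lemma empRad_image {α : Type*} {N : ℕ} (g : α → Fin N → ℝ) (S : Set α) :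
    empRad (g '' S)
      = 1 / 2 ^ N * (1 / N * ∑ σ, sSup ((fun a => signedSum σ (g a)) '' S)) := by
  rw [empRad]
  congr 1
  rw [Finset.mul_sum]
  refine Finset.sum_congr rfl fun σ _ => ?_
  rw [Set.image_image, ← sSup_image_const_mul (by positivity)]
  rfl

/-- Talagrand's contraction lemma: if `ℓ(·, y)` is `L`-Lipschitz in its
first argument for every `y`, then the empirical Rademacher complexity of the loss
class is at most `L` times that of `F`, on any fixed sample. -/
theorem stmt_7 {𝓧 𝓨 : Type*} (N : ℕ) (hN : 0 < N)
    (x : Fin N → 𝓧) (y : Fin N → 𝓨)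
    (F : Set (𝓧 → ℝ)) (hF : F.Nonempty)
    (ℓ : ℝ → 𝓨 → ℝ) (L : ℝ≥0)
    (hLip : ∀ yy : 𝓨, LipschitzWith L (fun a => ℓ a yy))
    (hbddF : ∀ σ : Fin N → Bool, BddAbove
      ((fun v : Fin N → ℝ => (1 / (N : ℝ)) * ∑ i, (if σ i then (1 : ℝ) else -1) * v i) ''
        ((fun f : 𝓧 → ℝ => fun i => f (x i)) '' F)))
    (hbddG : ∀ σ : Fin N → Bool, BddAbove
      ((fun v : Fin N → ℝ => (1 / (N : ℝ)) * ∑ i, (if σ i then (1 : ℝ) else -1) * v i) ''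
        ((fun f : 𝓧 → ℝ => fun i => ℓ (f (x i)) (y i)) '' F))) :
    empRad ((fun f : 𝓧 → ℝ => fun i => ℓ (f (x i)) (y i)) '' F)
      ≤ L * empRad ((fun f : 𝓧 → ℝ => fun i => f (x i)) '' F) := by
  have hN' : (0 : ℝ) < 1 / N := by positivity
  have hu (σ : Fin N → Bool) :
      BddAbove ((fun f : 𝓧 → ℝ => signedSum σ fun i => ℓ (f (x i)) (y i)) '' F) :=
    bddAbove_image_of_const_mul hN' (by have h := hbddG σ; rwa [Set.image_image] at h)
  have hv (σ : Fin N → Bool) : BddAbove ((fun f : 𝓧 → ℝ => signedSum σ fun i => f (x i)) '' F) :=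
    bddAbove_image_of_const_mul hN' (by have h := hbddF σ; rwa [Set.image_image] at h)
  have hcontr : ∀ i, ∀ f ∈ F, ∀ f' ∈ F,
      |ℓ (f (x i)) (y i) - ℓ (f' (x i)) (y i)| ≤ L * |f (x i) - f' (x i)| :=
    fun i f _ f' _ => by
      simpa only [Real.dist_eq] using (hLip (y i)).dist_le_mul (f (x i)) (f' (x i))
  have key := sum_sSup_signedSum_le_mul hF _ _ L.coe_nonneg hcontr hu hv
  rw [empRad_image, empRad_image]
  have hscale : (0 : ℝ) ≤ 1 / 2 ^ N * (1 / N) := by positivity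
  linarith [mul_le_mul_of_nonneg_left key hscale]
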